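/- Define sequences in the commutative polynomial ring ℂ[h₃, h₄, h₅, ..., h̄₃][γ] by T₃ = 0 and T_{j+1} = Σ_{s=0}^{j-3} a_{j,s} · h_{j-s} · (δ_{0s}γ² - 2h_{3+s}h̄₃) for j ≥ 3, where a_{j,s} = ((j+2s+3)/(2(j-1)))·C(j-1,s+2). Define the derivation ∂ on this ring by ∂h_j = h_{j+1} (for j ≥ 3), ∂h̄₃ = 0, ∂γ = 0. Then for all j ≥ 3: T_{j+1} = ∂T_j + (j/2)·(γ² - 2h₃h̄₃)·h_j. -/

import Mathlib

/-!
Splitting off the `γ²` term, `T_{j+1} = a_{j,0} h_j γ² - 2 h̄₃ Q_j` with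
`Q_j = Σ_s a_{j,s} h_{j-s} h_{3+s}`. Clearing the denominator `j - 1` gives
`a_{j,s} = C(j-1, s+2)/2 + C(j-2, s+1)`, so the coefficients obey Pascal's rule
`a_{j+1,s+1} = a_{j,s+1} + a_{j,s}`, vanish at `s = j - 2`, and `a_{j+1,0} - a_{j,0} = (j+1)/2`.
By Leibniz, `∂Q_j` is the sum of two index-shifted copies of `Q_j`, which Pascal's rule
recombines into `Q_{j+1}` up to the boundary term `(a_{j+1,0} - a_{j,0}) h_{j+1} h₃`;
together with `∂(a_{j,0} h_j γ²) = a_{j,0} h_{j+1} γ²` this gives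
`T_{j+2} - ∂T_{j+1} = ((j+1)/2) R_curv h_{j+1}`. The case `j = 3` is `T₄ = a_{3,0} R_curv h₃`
with `a_{3,0} = 3/2`.
-/

def acoef (j s : ℕ) : ℚ :=
  ((j : ℚ) + 2 * s + 3) / (2 * ((j : ℚ) - 1)) * (Nat.choose (j - 1) (s + 2))

open Finset

theorem acoef_add_two_eq_choose (m s : ℕ) :
    acoef (m + 2) s = (m + 1).choose (s + 2) / 2 + m.choose (s + 1) := by
  have key : ((m + 1 : ℕ) : ℚ) * m.choose (s + 1) = (m + 1).choose (s + 2) * ((s + 1 : ℕ) + 1) := by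
    exact_mod_cast Nat.add_one_mul_choose_eq m (s + 1)
  have hm : (m : ℚ) + 1 ≠ 0 := by positivity
  rw [acoef, show m + 2 - 1 = m + 1 from rfl]
  push_cast at key ⊢
  rw [show (m : ℚ) + 2 - 1 = m + 1 by ring]
  field_simp
  linear_combination -2 * key

theorem acoef_sub_two (j : ℕ) : acoef j (j - 2) = 0 := by
  simp [acoef, Nat.choose_eq_zero_of_lt (show j - 1 < j - 2 + 2 by omega)]

theorem acoef_succ_succ {j : ℕ} (hj : 2 ≤ j) (s : ℕ) :
    acoef (j + 1) (s + 1) = acoef j (s + 1) + acoef j s := by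
  obtain ⟨m, rfl⟩ := Nat.exists_eq_add_of_le' hj
  rw [show m + 2 + 1 = (m + 1) + 2 by ring, acoef_add_two_eq_choose, acoef_add_two_eq_choose, acoef_add_two_eq_choose,
    Nat.choose_succ_succ' (m + 1) (s + 2), Nat.choose_succ_succ' m (s + 1)]
  push_cast
  ring

theorem acoef_succ_zero {j : ℕ} (hj : 2 ≤ j) : acoef (j + 1) 0 = acoef j 0 + (j + 1) / 2 := by
  obtain ⟨m, rfl⟩ := Nat.exists_eq_add_of_le' hj
  rw [show m + 2 + 1 = (m + 1) + 2 by ring, acoef_add_two_eq_choose, acoef_add_two_eq_choose,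
    Nat.choose_succ_succ' (m + 1) 1, Nat.choose_succ_succ' m 0]
  simp only [Nat.choose_zero_right, zero_add, Nat.choose_one_right, Nat.reduceAdd, Nat.cast_add,
    Nat.cast_one, Nat.cast_ofNat]
  ring

section PairSum

variable {A R : Type*} [CommRing A] [CommRing R] [Algebra A R]

def pairSum (c : ℕ → ℕ → A) (u : ℕ → R) (j : ℕ) : R :=
  ∑ s ∈ range (j - 2), c j s • (u (j - s) * u (3 + s))

theorem pairSum_succ (c : ℕ → ℕ → A) (u : ℕ → R) {j : ℕ} (hj : 2 ≤ j)
    (hc : ∀ s, c (j + 1) (s + 1) = c j (s + 1) + c j s) (hc₀ : c j (j - 2) = 0) :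
    pairSum c u (j + 1) = (c (j + 1) 0 - c j 0) • (u (j + 1) * u 3) +
      ∑ s ∈ range (j - 2), c j s • (u (j + 1 - s) * u (3 + s) + u (j - s) * u (4 + s)) := by
  obtain ⟨n, rfl⟩ := Nat.exists_eq_add_of_le' hj
  have shift (s : ℕ) : n + 2 + 1 - (s + 1) = n + 2 - s := by omega
  -- `c j (j - 2) = 0` lets the sum run one step further before shifting the index
  have hfirst : ∑ s ∈ range n, c (n + 2) s • (u (n + 2 + 1 - s) * u (3 + s)) =
      c (n + 2) 0 • (u (n + 2 + 1) * u 3) +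
        ∑ s ∈ range n, c (n + 2) (s + 1) • (u (n + 2 - s) * u (4 + s)) := by
    rw [← add_zero (∑ s ∈ range n, _), ← zero_smul A (u (n + 2 + 1 - n) * u (3 + n)),
      ← show c (n + 2) n = 0 from hc₀, ← sum_range_succ, sum_range_succ', add_comm]
    simp only [shift, Nat.sub_zero, add_zero, show ∀ s, 3 + (s + 1) = 4 + s by omega]
  simp only [pairSum, show n + 2 + 1 - 2 = n + 1 by omega, show n + 2 - 2 = n by omega,
    sum_range_succ', hc, add_smul, sum_add_distrib, smul_add, hfirst, shift, sub_smul]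
  simp only [show ∀ s, 3 + (s + 1) = 4 + s by omega]
  abel

theorem Derivation.map_pairSum (D : Derivation A R R) (c : ℕ → ℕ → A) (u : ℕ → R)
    (hu : ∀ i, 3 ≤ i → D (u i) = u (i + 1)) {j : ℕ} (hj : 2 ≤ j)
    (hc : ∀ s, c (j + 1) (s + 1) = c j (s + 1) + c j s) (hc₀ : c j (j - 2) = 0) :
    D (pairSum c u j) = pairSum c u (j + 1) - (c (j + 1) 0 - c j 0) • (u (j + 1) * u 3) := by
  rw [pairSum_succ c u hj hc hc₀, add_sub_cancel_left, pairSum, map_sum]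
  refine sum_congr rfl fun s hs => ?_
  rw [mem_range] at hs
  rw [map_smul, D.leibniz, hu _ (by omega), hu _ (by omega), smul_eq_mul, smul_eq_mul,
    show j - s + 1 = j + 1 - s by omega, show 3 + s + 1 = 4 + s by omega]
  congr 1
  ring

theorem sum_algebraMap_mul_ite_sub_eq_pairSum (c : ℕ → ℕ → A) (u : ℕ → R) (g v : R) {j : ℕ} (hj : 3 ≤ j) :
    ∑ s ∈ range (j - 2), algebraMap A R (c j s) * u (j - s) *
        ((if s = 0 then g else 0) - 2 * u (3 + s) * v) =
      c j 0 • (u j * g) - 2 * v * pairSum c u j := by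
  simp only [mul_sub, sum_sub_distrib, mul_ite, mul_zero, sum_ite_eq', mem_range,
    show 0 < j - 2 by omega, if_true, pairSum, mul_sum, Algebra.smul_def, Nat.sub_zero]
  congr 1
  · ring
  · exact sum_congr rfl fun s _ => by ring

end PairSum

/-- In the polynomial ring `R = ℂ[γ, h̄₃, h₃, h₄, ...]` with the derivation `∂` satisfying
`∂h_j = h_{j+1}`, `∂h̄₃ = 0`, `∂γ = 0`, the sequence `T_j` defined by the explicit formula
`T_{j+1} = Σ_{s=0}^{j-3} a_{j,s} h_{j-s} (δ_{0s} γ² - 2 h_{3+s} h̄₃)` (with `T₃ = 0`)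
satisfies the recursion `T_{j+1} = ∂T_j + (j/2)(γ² - 2h₃h̄₃) h_j`. -/
theorem T_recursion {R : Type*} [CommRing R] [Algebra ℂ R]
    (D : Derivation ℂ R R) (γ hb : R) (h : ℕ → R) (T : ℕ → R)
    (hDh : ∀ j, 3 ≤ j → D (h j) = h (j + 1))
    (hDhb : D hb = 0) (hDγ : D γ = 0)
    (hT3 : T 3 = 0)
    (hTdef : ∀ j, 3 ≤ j → T (j + 1) =
      ∑ s ∈ Finset.range (j - 2),
        algebraMap ℂ R ((acoef j s : ℂ)) * h (j - s) *
          ((if s = 0 then γ ^ 2 else 0) - 2 * h (3 + s) * hb)) :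
    ∀ j, 3 ≤ j → T (j + 1) = D (T j) +
      algebraMap ℂ R ((j : ℂ) / 2) * ((γ ^ 2 - 2 * h 3 * hb) * h j) := by
  intro j hj
  set c : ℕ → ℕ → ℂ := fun j s => (acoef j s : ℂ) with hc
  have hT (k : ℕ) (hk : 3 ≤ k) : T (k + 1) = c k 0 • (h k * γ ^ 2) - 2 * hb * pairSum c h k :=
    (hTdef k hk).trans (sum_algebraMap_mul_ite_sub_eq_pairSum c h _ _ hk)
  obtain rfl | ⟨k, hk, rfl⟩ : j = 3 ∨ ∃ k, 3 ≤ k ∧ j = k + 1 :=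
    (eq_or_lt_of_le hj).imp Eq.symm fun hlt => ⟨j - 1, by omega, by omega⟩
  · have hc30 : c 3 0 = (3 : ℂ) / 2 := by norm_num [hc, acoef]
    rw [hT 3 le_rfl, hT3, map_zero, zero_add, pairSum]
    simp only [hc30, Algebra.smul_def, Nat.reduceSub, range_one, sum_singleton, tsub_zero, add_zero,
      Nat.cast_ofNat]
    ring
  · have hDT : D (T (k + 1)) = c k 0 • (h (k + 1) * γ ^ 2) - 2 * hb * D (pairSum c h k) := by
      have hD2 : D (2 : R) = 0 := by exact_mod_cast D.map_natCast 2
      rw [hT k hk, map_sub, D.map_smul, D.leibniz, D.leibniz_pow, hDγ, hDh k hk, D.leibniz,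
        D.leibniz, hDhb, hD2]
      simp only [smul_eq_mul, mul_zero, smul_zero, zero_add, add_zero, mul_comm (γ ^ 2)]
    have hcoef : c (k + 1) 0 = c k 0 + ((k + 1 : ℕ) : ℂ) / 2 := by
      simp [hc, acoef_succ_zero (by omega : 2 ≤ k)]
    rw [hDT, D.map_pairSum c h hDh (by omega : 2 ≤ k) (fun s => ?_) (by simp only [hc, acoef_sub_two, Rat.cast_zero]),
      hT (k + 1) (by omega), hcoef]
    · rw [add_sub_cancel_left]
      simp only [Algebra.smul_def, map_add]
      ring
    · simp [hc, acoef_succ_succ (by omega : 2 ≤ k)]
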